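/- Qualitative LTLf formulas are stutter-invariant on finite traces: let φ be a qualitative formula, let π = π_0 … π_{T-1} be a nonempty finite trace, let 0 ≤ s < T, and let π' be the trace π_0 … π_s π_s π_{s+1} … π_{T-1} obtained from π by duplicating the timestep π_s. Then π satisfies φ under LTLf semantics if and only if π' satisfies φ under LTLf semantics. -/
import Mathlib


/-- LTLf formulas over propositions indexed by ℕ. -/
inductive LTLf : Type where
  | prop : ℕ → LTLf
  | not : LTLf → LTLf
  | and : LTLf → LTLf → LTLf
  | or : LTLf → LTLf → LTLf
  | next : LTLf → LTLf
  | wnext : LTLf → LTLf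
  | until_ : LTLf → LTLf → LTLf

/-- The formula `true`, expressed as the tautology `p₀ ∨ ¬p₀`. -/
def LTLf.top : LTLf := .or (.prop 0) (.not (.prop 0))

/-- Eventually: `F φ := true U φ`. -/
def LTLf.ev (φ : LTLf) : LTLf := .until_ .top φ

/-- Globally: `G φ := ¬ F ¬ φ`. -/
def LTLf.glob (φ : LTLf) : LTLf := .not (.ev (.not φ))

/-- Weak until: `φ W ψ := (φ U ψ) ∨ G φ`. -/
def LTLf.wuntil (φ ψ : LTLf) : LTLf := .or (.until_ φ ψ) (.glob φ)

/-- LTLf satisfaction `π, t ⊨ φ` on a finite trace of length `T`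
(the trace is given by `π : ℕ → ℕ → Bool`, only its values at timesteps `< T` matter). -/
def FinSat (T : ℕ) (π : ℕ → ℕ → Bool) : LTLf → ℕ → Prop
  | .prop p, t => π t p = true
  | .not φ, t => ¬ FinSat T π φ t
  | .and φ ψ, t => FinSat T π φ t ∧ FinSat T π ψ t
  | .or φ ψ, t => FinSat T π φ t ∨ FinSat T π ψ t
  | .next φ, t => t + 1 < T ∧ FinSat T π φ (t + 1)
  | .wnext φ, t => T ≤ t + 1 ∨ FinSat T π φ (t + 1)
  | .until_ φ ψ, t =>
      ∃ k, t ≤ k ∧ k < T ∧ FinSat T π ψ k ∧ ∀ j, t ≤ j → j < k → FinSat T π φ j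

/-- LTL satisfaction `σ, t ⊨ φ` on an infinite trace `σ`. -/
def InfSat (σ : ℕ → ℕ → Bool) : LTLf → ℕ → Prop
  | .prop p, t => σ t p = true
  | .not φ, t => ¬ InfSat σ φ t
  | .and φ ψ, t => InfSat σ φ t ∧ InfSat σ ψ t
  | .or φ ψ, t => InfSat σ φ t ∨ InfSat σ ψ t
  | .next φ, t => InfSat σ φ (t + 1)
  | .wnext φ, t => InfSat σ φ (t + 1)
  | .until_ φ ψ, t =>
      ∃ k, t ≤ k ∧ InfSat σ ψ k ∧ ∀ j, t ≤ j → j < k → InfSat σ φ j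

/-- A formula is qualitative if it contains no next (`X`) and no weak next (`WX`). -/
def Qualitative : LTLf → Prop
  | .prop _ => True
  | .not φ => Qualitative φ
  | .and φ ψ => Qualitative φ ∧ Qualitative ψ
  | .or φ ψ => Qualitative φ ∧ Qualitative ψ
  | .next _ => False
  | .wnext _ => False
  | .until_ φ ψ => Qualitative φ ∧ Qualitative ψ

/-- Binary step function: `H z = 1` if `z ≥ 0` and `0` otherwise. -/
noncomputable def H (z : ℝ) : ℝ := if 0 ≤ z then 1 else 0

lemma stutter_aux (T : ℕ) (π : ℕ → ℕ → Bool) (s : ℕ) (hs : s < T) :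
    ∀ φ : LTLf, Qualitative φ → ∀ u v, u < T + 1 →
      ((u ≤ s ∧ v = u) ∨ (s < u ∧ u = v + 1)) →
      (FinSat (T + 1) (fun t => if t ≤ s then π t else π (t - 1)) φ u ↔
        FinSat T π φ v) := by
  intro φ
  induction φ with
  | prop p =>
    intro _ u v hu hr
    simp only [FinSat]
    rcases hr with ⟨h1, rfl⟩ | ⟨h1, h2⟩
    · simp [h1]
    · have h3 : ¬ u ≤ s := by omega
      have h4 : u - 1 = v := by omega
      simp [h3, h4]
  | not φ ih =>
    intro hq u v hu hr
    simp only [FinSat]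
    exact not_congr (ih hq u v hu hr)
  | and φ ψ ihφ ihψ =>
    intro hq u v hu hr
    simp only [FinSat]
    exact and_congr (ihφ hq.1 u v hu hr) (ihψ hq.2 u v hu hr)
  | or φ ψ ihφ ihψ =>
    intro hq u v hu hr
    simp only [FinSat]
    exact or_congr (ihφ hq.1 u v hu hr) (ihψ hq.2 u v hu hr)
  | next φ _ =>
    intro hq
    exact hq.elim
  | wnext φ _ =>
    intro hq
    exact hq.elim
  | until_ φ ψ ihφ ihψ =>
    intro hq u v hu hr
    simp only [FinSat]
    constructor
    · rintro ⟨k', hk1, hk2, hψ', hφ'⟩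
      by_cases hks : k' ≤ s
      · refine ⟨k', by omega, by omega,
          (ihψ hq.2 k' k' (by omega) (by omega)).mp hψ', ?_⟩
        intro j hj1 hj2
        exact (ihφ hq.1 j j (by omega) (by omega)).mp (hφ' j (by omega) (by omega))
      · refine ⟨k' - 1, by omega, by omega,
          (ihψ hq.2 k' (k' - 1) (by omega) (by omega)).mp hψ', ?_⟩
        intro j hj1 hj2
        by_cases hjs : j < s
        · exact (ihφ hq.1 j j (by omega) (by omega)).mp (hφ' j (by omega) (by omega))
        · exact (ihφ hq.1 (j + 1) j (by omega) (by omega)).mp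
            (hφ' (j + 1) (by omega) (by omega))
    · rintro ⟨k, hk1, hk2, hψk, hφk⟩
      by_cases hcase : k ≤ s ∧ u ≤ k
      · refine ⟨k, by omega, by omega,
          (ihψ hq.2 k k (by omega) (by omega)).mpr hψk, ?_⟩
        intro j hj1 hj2
        exact (ihφ hq.1 j j (by omega) (by omega)).mpr (hφk j (by omega) (by omega))
      · refine ⟨k + 1, by omega, by omega,
          (ihψ hq.2 (k + 1) k (by omega) (by omega)).mpr hψk, ?_⟩
        intro j hj1 hj2
        by_cases hjs : j ≤ s
        · exact (ihφ hq.1 j j (by omega) (by omega)).mpr (hφk j (by omega) (by omega))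
        · exact (ihφ hq.1 j (j - 1) (by omega) (by omega)).mpr
            (hφk (j - 1) (by omega) (by omega))

/-- Qualitative LTLf formulas are stutter-invariant on finite traces: duplicating
the timestep `π_s` of a nonempty finite trace does not change satisfaction. -/
theorem finite_stutter_invariant
    (T : ℕ) (hT : 1 ≤ T) (π : ℕ → ℕ → Bool) (φ : LTLf) (hφ : Qualitative φ)
    (s : ℕ) (hs : s < T) :
    FinSat T π φ 0 ↔
      FinSat (T + 1) (fun t => if t ≤ s then π t else π (t - 1)) φ 0 :=
  (stutter_aux T π s hs φ hφ 0 0 (by omega) (Or.inl ⟨Nat.zero_le s, rfl⟩)).symm
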